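/- Let σ be an order-n sign pattern and let A ∈ Q(σ) be a nilpotent matrix that allows a full-rank Jacobian. Then A is nonderogatory; that is, the minimal polynomial of A equals its characteristic polynomial (equivalently, every eigenvalue of A has geometric multiplicity one). -/

import Mathlib

/-!
If a nilpotent `A` is derogatory, its minimal polynomial is `X ^ k` with `k < n`, so
`A ^ (n - 1) = 0`. Cancelling the monic `X - A` in
`adj (X - A) * (X - A) = X ^ n = X ^ n - A ^ n` gives `adj (X - A) = ∑ X ^ k * A ^ (n - 1 - k)`,
and setting `X = 0` yields `adj A = ± A ^ (n - 1) = 0`.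
The last coefficient of the characteristic polynomial is `(-1) ^ n * det`, and the determinant is
affine in each entry with the corresponding cofactor as slope. All cofactors vanish, so this
coefficient is constant along every coordinate line through `A`: the last row of the Jacobian is
zero, and the Jacobian cannot have rank `n`.
-/

open Matrix Polynomial

/-- The qualitative class of a sign pattern `σ`: real matrices whose entrywise sign is `σ`. -/
def Qclass {n : ℕ} (σ : Matrix (Fin n) (Fin n) ℝ) : Set (Matrix (Fin n) (Fin n) ℝ) :=
  {A | ∀ i j, Real.sign (A i j) = σ i j}

/-- The sign pattern of a real matrix. -/
noncomputable def signPattern {n : ℕ} (B : Matrix (Fin n) (Fin n) ℝ) : Matrix (Fin n) (Fin n) ℝ :=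
  Matrix.of fun i j => Real.sign (B i j)

/-- `σ'` is a superpattern of `σ`. -/
def Superpattern {n : ℕ} (σ' σ : Matrix (Fin n) (Fin n) ℝ) : Prop :=
  ∀ i j, σ i j ≠ 0 → σ' i j = σ i j

/-- A sign pattern is spectrally arbitrary if every monic real polynomial of degree `n`
is the characteristic polynomial of some realization. -/
def SpectrallyArbitrary {n : ℕ} (σ : Matrix (Fin n) (Fin n) ℝ) : Prop :=
  ∀ p : Polynomial ℝ, p.Monic → p.natDegree = n → ∃ A ∈ Qclass σ, A.charpoly = p

/-- The matrix obtained from `A` by replacing the entries in positions `S` by the variables `x`. -/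
def matWithVars {n : ℕ} (A : Matrix (Fin n) (Fin n) ℝ) (S : Finset (Fin n × Fin n))
    (x : S → ℝ) : Matrix (Fin n) (Fin n) ℝ :=
  Matrix.of fun i j => if h : (i, j) ∈ S then x ⟨(i, j), h⟩ else A i j

/-- The coefficient vector `(f_1, …, f_n)` where
`charpoly (matWithVars A S x) = z^n + f_1 z^(n-1) + ⋯ + f_n`. -/
noncomputable def coeffVec {n : ℕ} (A : Matrix (Fin n) (Fin n) ℝ) (S : Finset (Fin n × Fin n))
    (x : S → ℝ) : Fin n → ℝ :=
  fun i => (matWithVars A S x).charpoly.coeff (n - 1 - (i : ℕ))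

/-- `A ∈ Q(σ)` allows a full-rank Jacobian: for some set `S` of positions where `σ` is nonzero,
the Fréchet derivative at `A` of the coefficient map is surjective. -/
def AllowsFullRankJacobian {n : ℕ} (σ A : Matrix (Fin n) (Fin n) ℝ) : Prop :=
  ∃ S : Finset (Fin n × Fin n), (∀ p ∈ S, σ p.1 p.2 ≠ 0) ∧
    ∃ L : (↥S → ℝ) →L[ℝ] (Fin n → ℝ),
      HasFDerivAt (coeffVec A S) L (fun p => A p.1.1 p.1.2) ∧ Function.Surjective L


namespace Matrix

variable {ι : Type*} [Fintype ι] [DecidableEq ι]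

theorem charpoly_eq_X_pow_of_isNilpotent {R : Type*} [CommRing R] [IsReduced R]
    {A : Matrix ι ι R} (hA : IsNilpotent A) : A.charpoly = X ^ Fintype.card ι :=
  sub_eq_zero.mp <| Polynomial.ext fun i => by
    have h := Polynomial.isNilpotent_iff.mp (isNilpotent_charpoly_sub_pow_of_isNilpotent hA) i
    simpa using h.eq_zero

theorem exists_pow_eq_zero_of_minpoly_ne_charpoly {K : Type*} [Field K] {A : Matrix ι ι K}
    (hA : A.charpoly = X ^ Fintype.card ι) (hne : minpoly K A ≠ A.charpoly) :
    ∃ k < Fintype.card ι, A ^ k = 0 := by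
  obtain ⟨k, hk, hassoc⟩ :=
    (dvd_prime_pow prime_X _).mp (hA ▸ minpoly.dvd K A A.aeval_self_charpoly)
  have hmin : minpoly K A = X ^ k :=
    eq_of_monic_of_associated (minpoly.monic (.of_finite K A)) (monic_X_pow k) hassoc
  refine ⟨k, hk.lt_of_ne ?_, by simpa [hmin] using minpoly.aeval K A⟩
  rintro rfl
  exact hne (hmin.trans hA.symm)

theorem adjugate_neg_eq_pow_of_charpoly_eq_X_pow {R : Type*} [CommRing R] {A : Matrix ι ι R}
    (hA : A.charpoly = X ^ Fintype.card ι) : adjugate (-A) = A ^ (Fintype.card ι - 1) := by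
  set n := Fintype.card ι
  obtain hn | hn := Nat.eq_zero_or_pos n
  · have : IsEmpty ι := Fintype.card_eq_zero_iff.mp hn
    exact Subsingleton.elim _ _
  have hAn : A ^ n = 0 := by simpa [hA] using A.aeval_self_charpoly
  have hadj : matPolyEquiv (adjugate (charmatrix A)) * (X - C A) = X ^ n := by
    have h := congrArg matPolyEquiv (adjugate_mul (charmatrix A))
    rw [map_mul, matPolyEquiv_charmatrix, ← charpoly, matPolyEquiv_smul_one, hA] at h
    simpa using h
  have hgeom : (∑ k ∈ Finset.range n, (X : (Matrix ι ι R)[X]) ^ k * C A ^ (n - 1 - k)) *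
      (X - C A) = X ^ n := by
    rw [(commute_X (C A)).geom_sum₂_mul, ← map_pow, hAn, map_zero, sub_zero]
  have heq := (monic_X_sub_C A).isRegular.right (hadj.trans hgeom.symm)
  have hcharmatrix : (constantCoeff : R[X] →+* R).mapMatrix (charmatrix A) = -A := by
    ext i j
    by_cases h : i = j <;> simp [h]
  calc adjugate (-A) = (constantCoeff : R[X] →+* R).mapMatrix (adjugate (charmatrix A)) := by
        rw [RingHom.map_adjugate, hcharmatrix]
    _ = (matPolyEquiv (adjugate (charmatrix A))).coeff 0 := by
        ext i j
        simp [matPolyEquiv_coeff_apply]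
    _ = A ^ (n - 1) := by
        rw [heq]
        simp [finsetSum_coeff, hn, ← map_pow]

theorem adjugate_eq_zero_of_charpoly_eq_X_pow {R : Type*} [CommRing R] {A : Matrix ι ι R}
    (hA : A.charpoly = X ^ Fintype.card ι) (hpow : A ^ (Fintype.card ι - 1) = 0) :
    adjugate A = 0 :=
  calc adjugate A = adjugate ((-1 : R) • -A) := by rw [neg_one_smul, neg_neg]
    _ = 0 := by rw [adjugate_smul, adjugate_neg_eq_pow_of_charpoly_eq_X_pow hA, hpow, smul_zero]

theorem det_updateRow_add_single {R : Type*} [CommRing R] (A : Matrix ι ι R) (i j : ι) (t : R) :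
    (A.updateRow i (A i + Pi.single j t)).det = A.det + t * adjugate A j i := by
  have hsingle : (Pi.single j t : ι → R) = t • Pi.single j 1 := by
    rw [← Pi.single_smul', smul_eq_mul, mul_one]
  rw [det_updateRow_add, updateRow_eq_self, hsingle, det_updateRow_smul, adjugate_apply]

end Matrix

theorem HasFDerivAt.apply_eq_zero_of_forall_add_smul_eq {𝕜 E F : Type*}
    [NontriviallyNormedField 𝕜] [NormedAddCommGroup E] [NormedSpace 𝕜 E] [NormedAddCommGroup F]
    [NormedSpace 𝕜 F] {f : E → F} {L : E →L[𝕜] F} {x v : E} (hf : HasFDerivAt f L x)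
    (hv : ∀ t : 𝕜, f (x + t • v) = f x) : L v = 0 := by
  have h : HasDerivAt (fun t : 𝕜 => f (x + t • v)) (L v) 0 := hf.hasLineDerivAt v
  simp only [hv] at h
  exact h.unique (hasDerivAt_const _ _)

theorem HasFDerivAt.eq_zero_of_forall_add_single_eq {𝕜 F ι : Type*} [NontriviallyNormedField 𝕜]
    [NormedAddCommGroup F] [NormedSpace 𝕜 F] [Fintype ι] [DecidableEq ι]
    {f : (ι → 𝕜) → F} {L : (ι → 𝕜) →L[𝕜] F} {x : ι → 𝕜} (hf : HasFDerivAt f L x)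
    (hx : ∀ i (t : 𝕜), f (x + Pi.single i t) = f x) : L = 0 := by
  have hsingle (i : ι) (t : 𝕜) : (Pi.single i t : ι → 𝕜) = t • Pi.single i 1 := by
    rw [← Pi.single_smul', smul_eq_mul, mul_one]
  refine ContinuousLinearMap.coe_injective (LinearMap.pi_ext fun i t => ?_)
  have h : L (Pi.single i 1) = 0 :=
    hf.apply_eq_zero_of_forall_add_smul_eq fun t => by rw [← hsingle, hx]
  simp [hsingle i t, h]

section coordinates

variable {n : ℕ} (A : Matrix (Fin n) (Fin n) ℝ) (S : Finset (Fin n × Fin n))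

theorem matWithVars_self : matWithVars A S (fun q => A q.1.1 q.1.2) = A := by
  ext a b
  simp [matWithVars]

theorem matWithVars_add_single (p : S) (t : ℝ) :
    matWithVars A S ((fun q => A q.1.1 q.1.2) + Pi.single p t) =
      A.updateRow p.1.1 (A p.1.1 + Pi.single p.1.2 t) := by
  obtain ⟨⟨i, j⟩, hp⟩ := p
  ext a b
  by_cases ha : a = i <;> by_cases hb : b = j
  · subst ha hb
    simp [matWithVars, hp]
  all_goals
    by_cases hab : (a, b) ∈ S <;> simp [matWithVars, updateRow_apply, Pi.single_apply, hab, ha, hb]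

theorem coeffVec_of_val_eq_pred (x : S → ℝ) {i : Fin n} (hi : (i : ℕ) = n - 1) :
    coeffVec A S x i = (-1) ^ n * (matWithVars A S x).det := by
  rw [det_eq_sign_charpoly_coeff, Fintype.card_fin, ← mul_assoc, ← pow_add,
    Even.neg_one_pow ⟨n, rfl⟩, one_mul, coeffVec, hi]
  congr 1
  omega

theorem coeffVec_add_single_of_adjugate_eq_zero (hA : adjugate A = 0) (p : S) (t : ℝ)
    {i : Fin n} (hi : (i : ℕ) = n - 1) :
    coeffVec A S ((fun q => A q.1.1 q.1.2) + Pi.single p t) i =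
      coeffVec A S (fun q => A q.1.1 q.1.2) i := by
  rw [coeffVec_of_val_eq_pred A S _ hi, coeffVec_of_val_eq_pred A S _ hi, matWithVars_add_single,
    det_updateRow_add_single, matWithVars_self, hA]
  simp

end coordinates

theorem statement4_general {n : ℕ} (σ A : Matrix (Fin n) (Fin n) ℝ)
    (hnil : IsNilpotent A) (hJ : AllowsFullRankJacobian σ A) :
    minpoly ℝ A = A.charpoly := by
  by_contra hne
  have hchar := charpoly_eq_X_pow_of_isNilpotent hnil
  obtain ⟨k, hkn, hAk⟩ := exists_pow_eq_zero_of_minpoly_ne_charpoly hchar hne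
  rw [Fintype.card_fin] at hkn
  have hadj : adjugate A = 0 := adjugate_eq_zero_of_charpoly_eq_X_pow hchar
    (pow_eq_zero_of_le (by rw [Fintype.card_fin]; omega) hAk)
  obtain ⟨S, -, L, hL, hsurj⟩ := hJ
  let i₀ : Fin n := ⟨n - 1, by omega⟩
  have hL₀ : HasFDerivAt (coeffVec A S · i₀) ((ContinuousLinearMap.proj i₀).comp L)
      (fun p => A p.1.1 p.1.2) := ((hasFDerivAt_apply i₀ _).comp _ hL :)
  have hlast : (ContinuousLinearMap.proj i₀).comp L = 0 :=
    hL₀.eq_zero_of_forall_add_single_eq fun p t =>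
      coeffVec_add_single_of_adjugate_eq_zero A S hadj p t rfl
  obtain ⟨y, hy⟩ := hsurj (Pi.single i₀ 1)
  simpa [hy] using congr($hlast y)

/-- A nilpotent realization of a sign pattern allowing a full-rank Jacobian
is nonderogatory, i.e. its minimal polynomial equals its characteristic polynomial. -/
theorem statement4 {n : ℕ} (σ A : Matrix (Fin n) (Fin n) ℝ)
    (hA : A ∈ Qclass σ) (hnil : IsNilpotent A) (hJ : AllowsFullRankJacobian σ A) :
    minpoly ℝ A = A.charpoly :=
  statement4_general σ A hnil hJ
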